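/- For any constant C, the function V(p) = p·λ(Π/r + R)/(1 + Nλ/r) + C·φ(p), where φ(p) = (1-p)·((1-p)/p)^(r/(Nλ)), solves the differential equation (1 + Npλ/r)·V(p) + (Np(1-p)λ/r)·V'(p) = pλ(Π/r + R) for all p ∈ (0,1). -/
import Mathlib


/-- V(p) = pλ(Π/r + R)/(1 + Nλ/r) + C·φ(p) solves
(1 + Npλ/r)·V(p) + (Np(1-p)λ/r)·V'(p) = pλ(Π/r + R) on (0,1), for any constant C. -/
theorem value_function_ode (r lam N R Pi C : ℝ) (hr : 0 < r) (hlam : 0 < lam)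
    (hN : 1 ≤ N) (hR : 0 ≤ R) (hPi : 0 < Pi) :
    ∀ p ∈ Set.Ioo (0:ℝ) 1,
      (1 + N*p*lam/r) *
          (p * lam * (Pi/r + R) / (1 + N*lam/r) + C * ((1-p) * ((1-p)/p) ^ (r/(N*lam))))
        + (N*p*(1-p)*lam/r) *
          deriv (fun q => q * lam * (Pi/r + R) / (1 + N*lam/r)
            + C * ((1-q) * ((1-q)/q) ^ (r/(N*lam)))) p
      = p * lam * (Pi/r + R) := by
  rintro p ⟨hp0, hp1⟩
  have hN0 : (0:ℝ) < N := lt_of_lt_of_le one_pos hN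
  have hp0' : p ≠ 0 := ne_of_gt hp0
  have h1p : (0:ℝ) < 1 - p := by linarith
  set a : ℝ := r/(N*lam) with ha
  set K : ℝ := lam * (Pi/r + R) / (1 + N*lam/r) with hK
  have hx : (0:ℝ) < (1-p)/p := div_pos h1p hp0
  -- derivative of (1-q)/q
  have hg : HasDerivAt (fun q : ℝ => (1-q)/q) (((-1)*p - (1-p)*1)/p^2) p := by
    exact ((hasDerivAt_id p).const_sub 1).div (hasDerivAt_id p) hp0'
  have hg' : HasDerivAt (fun q : ℝ => (1-q)/q) (-(1/p^2)) p := by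
    convert hg using 1; field_simp; ring
  -- derivative of ((1-q)/q)^a
  have hh : HasDerivAt (fun q : ℝ => ((1-q)/q)^a)
      (-(1/p^2) * a * ((1-p)/p)^(a-1)) p :=
    hg'.rpow_const (Or.inl (ne_of_gt hx))
  -- derivative of φ
  have hphi : HasDerivAt (fun q : ℝ => (1-q) * ((1-q)/q)^a)
      ((-1) * (((1-p)/p)^a) + (1-p) * (-(1/p^2) * a * ((1-p)/p)^(a-1))) p := by
    exact (((hasDerivAt_id p).const_sub 1)).mul hh
  -- full derivative
  have hV : HasDerivAt (fun q : ℝ => q * K + C * ((1-q) * ((1-q)/q)^a))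
      (K + C * ((-1) * (((1-p)/p)^a) + (1-p) * (-(1/p^2) * a * ((1-p)/p)^(a-1)))) p := by
    have h1 : HasDerivAt (fun q : ℝ => q * K) K p := by
      simpa using (hasDerivAt_id p).mul_const K
    exact h1.add (hphi.const_mul C)
  have hfun : (fun q : ℝ => q * lam * (Pi/r + R) / (1 + N*lam/r)
      + C * ((1-q) * ((1-q)/q) ^ (r/(N*lam))))
      = (fun q : ℝ => q * K + C * ((1-q) * ((1-q)/q)^a)) := by
    funext q; rw [hK, ha]; ring
  rw [hfun, hV.deriv]
  -- rpow identity
  have hsplit : ((1-p)/p)^a = ((1-p)/p) * ((1-p)/p)^(a-1) := by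
    have h := Real.rpow_add hx 1 (a-1)
    rw [Real.rpow_one] at h
    rw [← h]; ring_nf
  rw [hsplit]
  have hNl : N*lam ≠ 0 := ne_of_gt (mul_pos hN0 hlam)
  have hr' : r ≠ 0 := ne_of_gt hr
  have hden : (1 : ℝ) + N*lam/r ≠ 0 := by positivity
  rw [hK, ha]
  field_simp
  ring
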